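/- arXiv:1708.08538 — 2 statements merged into one kernel-verified Lean document; each statement's English description precedes it below -/
import Mathlib

section
/- Let X be a complex Banach space and Δ : S(c₀(Γ)) → S(X) a surjective isometry. Let n₁,…,n_k be distinct elements of Γ. Then ∑_{j=1}^k Δ(α_j e_{n_j}) = Δ(∑_{j=1}^k α_j e_{n_j}) for all α₁,…,α_k ∈ 𝕋. Consequently, {Δ(e_{n₁}),…,Δ(e_{n_k})} is completely M-orthogonal: ‖∑_{j=1}^k α_j Δ(e_{n_j})‖ = max_j |α_j| for all α₁,…,α_k ∈ ℂ. -/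
/-!
Extend `Δ` by zero to a map `D` on `c₀(Γ)`. Two features of `c₀(Γ)` drive the argument: a
coordinate of a point `g` of the unit ball is pinned by distances, `‖g - μ e_γ‖ ≥ 2` forcing
`g γ = -μ`; and norms are attained, so a point `z` of the unit ball with `z γ ≠ 0` lies at distance
`< 1` from the vector `q` of phases of its coordinates of modulus `≥ |z γ|`, which has `|q γ| = 1`.

With surjectivity these give `D (-u) = -D u` for every `u` whose nonzero coordinates are
unimodular, and then that a norming functional of `D (μ e_γ)` vanishes on `D u` when `u γ = 0`.
Testing preimages against such functionals shows `D (a + b) = D a + D b` for disjointly supported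
`a`, `b`, and that every preimage of `ε D (e_n)` is a multiple of `e_n`. So `∑ β_j D (e_{n_j})`
has norm one for unimodular `β`; rotating the values of a functional norming
`∑ α_j D (e_{n_j})` bounds its norm by `max |α_j|`, and the functionals of the `D (e_{n_j})` give
the reverse inequality.
-/

open ZeroAtInfty Metric

/-- The canonical basis vector `e n` of `c₀(Γ)`. -/
noncomputable def stdBasis {Γ : Type*} [TopologicalSpace Γ] [DiscreteTopology Γ] [DecidableEq Γ]
    (n : Γ) : C₀(Γ, ℂ) where
  toFun := fun k => if k = n then 1 else 0
  continuous_toFun := continuous_of_discreteTopology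
  zero_at_infty' := by
    have h : (fun k => if k = n then (1 : ℂ) else 0) =ᶠ[Filter.cocompact Γ] 0 := by
      refine Filter.mem_cocompact.2 ⟨{n}, isCompact_singleton, ?_⟩
      intro k hk
      simp only [Set.mem_compl_iff, Set.mem_singleton_iff] at hk
      simp [hk]
    exact Filter.Tendsto.congr' h.symm tendsto_const_nhds

open Function

namespace Complex

theorem exp_neg_arg_mul_I_mul (z : ℂ) : exp (-arg z * I) * z = ‖z‖ := by
  conv_lhs => rw [← norm_mul_exp_arg_mul_I z]
  rw [mul_left_comm, ← exp_add]
  simp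

theorem norm_sub_exp_arg_mul_I {w : ℂ} (hw : ‖w‖ ≤ 1) : ‖w - exp (arg w * I)‖ = 1 - ‖w‖ := by
  have : w - exp (arg w * I) = ((‖w‖ - 1 : ℝ) : ℂ) * exp (arg w * I) := by
    push_cast
    rw [sub_one_mul, norm_mul_exp_arg_mul_I]
  rw [this, norm_mul, norm_exp_ofReal_mul_I, mul_one, norm_real, Real.norm_of_nonpos (by linarith)]
  ring

end Complex

theorem eq_of_norm_le_one_of_two_le_norm_add {E : Type*} [NormedAddCommGroup E] [NormedSpace ℝ E]
    [StrictConvexSpace ℝ E] {x y : E} (hx : ‖x‖ ≤ 1) (hy : ‖y‖ ≤ 1) (h : 2 ≤ ‖x + y‖) :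
    x = y := by
  by_contra hne
  have := norm_combo_lt_of_ne hx hy hne (a := 1 / 2) (b := 1 / 2) (by norm_num) (by norm_num)
    (by norm_num)
  rw [← smul_add, norm_smul] at this
  norm_num at this
  linarith

section ComplexNormedSpace

variable {X : Type*} [NormedAddCommGroup X] [NormedSpace ℂ X]

theorem exists_dual_eq_one_of_two_le_norm_add {x y : X} (hx : ‖x‖ ≤ 1) (hy : ‖y‖ ≤ 1)
    (h : 2 ≤ ‖x + y‖) : ∃ φ : X →L[ℂ] ℂ, ‖φ‖ ≤ 1 ∧ φ x = 1 ∧ φ y = 1 := by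
  obtain ⟨φ, hφ, hφxy⟩ := exists_dual_vector'' ℂ (x + y)
  have h2 : ‖x + y‖ = 2 := le_antisymm ((norm_add_le x y).trans (by linarith)) h
  have hsum : φ x + φ y = 2 := by rw [← map_add, hφxy, h2]; norm_num
  have heq : φ x = φ y := eq_of_norm_le_one_of_two_le_norm_add
    (by simpa using φ.le_of_opNorm_le_of_le hφ hx) (by simpa using φ.le_of_opNorm_le_of_le hφ hy)
    (by rw [hsum]; norm_num)
  exact ⟨φ, hφ, by linear_combination (hsum + heq) / 2, by linear_combination (hsum - heq) / 2⟩

theorem norm_sum_smul_le_of_forall_norm_eq_one {ι : Type*} [Fintype ι] {v : ι → X}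
    (hv : ∀ β : ι → ℂ, (∀ i, ‖β i‖ = 1) → ‖∑ i, β i • v i‖ ≤ 1) {α : ι → ℂ} {M : ℝ}
    (hM : 0 ≤ M) (hα : ∀ i, ‖α i‖ ≤ M) : ‖∑ i, α i • v i‖ ≤ M := by
  obtain ⟨φ, hφ, hφx⟩ := exists_dual_vector'' ℂ (∑ i, α i • v i)
  set β : ι → ℂ := fun i => Complex.exp (-Complex.arg (φ (v i)) * Complex.I)
  have hβ : ∀ i, β i * φ (v i) = ‖φ (v i)‖ := fun i => Complex.exp_neg_arg_mul_I_mul _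
  have hβ1 : ∀ i, ‖β i‖ = 1 := fun i => by
    simpa [β, neg_mul] using Complex.norm_exp_ofReal_mul_I (-Complex.arg (φ (v i)))
  calc ‖∑ i, α i • v i‖ = ‖φ (∑ i, α i • v i)‖ := by simp [hφx]
    _ ≤ ∑ i, ‖α i‖ * ‖φ (v i)‖ := by
        simpa [map_sum, norm_mul] using norm_sum_le Finset.univ fun i => α i * φ (v i)
    _ ≤ ∑ i, M * ‖φ (v i)‖ := by gcongr with i; exact hα i
    _ = M * ‖φ (∑ i, β i • v i)‖ := by
        simp_rw [← Finset.mul_sum, map_sum, map_smul, smul_eq_mul, hβ]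
        norm_cast
        rw [Real.norm_of_nonneg (by positivity)]
    _ ≤ M * 1 := by
        gcongr
        simpa using φ.le_of_opNorm_le_of_le hφ (hv β hβ1)
    _ = M := mul_one M

theorem norm_le_norm_sum_smul_of_dual {ι : Type*} [Fintype ι] {v : ι → X} {j : ι}
    {φ : X →L[ℂ] ℂ} (hφ : ‖φ‖ ≤ 1) (hφj : φ (v j) = 1) (hφi : ∀ i ≠ j, φ (v i) = 0)
    (α : ι → ℂ) : ‖α j‖ ≤ ‖∑ i, α i • v i‖ := by
  have : φ (∑ i, α i • v i) = α j := by
    rw [map_sum, Finset.sum_eq_single j (fun i _ hi => by simp [hφi i hi]) (by simp)]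
    simp [hφj]
  simpa [this] using φ.le_of_opNorm_le hφ (∑ i, α i • v i)

end ComplexNormedSpace

section SphereIsometry

variable {E F : Type*} [NormedAddCommGroup E] [NormedAddCommGroup F]

/-- `D` maps the unit sphere of `E` isometrically onto that of `F`. Asking `D 0 = 0` lets `D` be
applied to vectors that may vanish without a case distinction. -/
structure IsSphereIsometry (D : E → F) : Prop where
  norm_map : ∀ x, ‖x‖ = 1 → ‖D x‖ = 1
  norm_map_sub_map : ∀ x y, ‖x‖ = 1 → ‖y‖ = 1 → ‖D x - D y‖ = ‖x - y‖
  exists_map_eq : ∀ v, ‖v‖ = 1 → ∃ x, ‖x‖ = 1 ∧ D x = v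
  map_zero : D 0 = 0

open Classical in
noncomputable def sphereExtend (Δ : sphere (0 : E) 1 → sphere (0 : F) 1) (x : E) : F :=
  if hx : x ∈ sphere (0 : E) 1 then Δ ⟨x, hx⟩ else 0

theorem sphereExtend_coe (Δ : sphere (0 : E) 1 → sphere (0 : F) 1) (x : sphere (0 : E) 1) :
    sphereExtend Δ x = Δ x := by
  simp [sphereExtend]

theorem isSphereIsometry_sphereExtend {Δ : sphere (0 : E) 1 → sphere (0 : F) 1}
    (hiso : Isometry Δ) (hsurj : Surjective Δ) : IsSphereIsometry (sphereExtend Δ) where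
  norm_map x hx := by
    rw [← mem_sphere_zero_iff_norm] at hx
    simp [sphereExtend_coe Δ ⟨x, hx⟩]
  norm_map_sub_map x y hx hy := by
    rw [← mem_sphere_zero_iff_norm] at hx hy
    have := hiso.dist_eq ⟨x, hx⟩ ⟨y, hy⟩
    rwa [Subtype.dist_eq, Subtype.dist_eq, dist_eq_norm, dist_eq_norm, ← sphereExtend_coe,
      ← sphereExtend_coe] at this
  exists_map_eq v hv := by
    obtain ⟨x, hx⟩ := hsurj ⟨v, mem_sphere_zero_iff_norm.2 hv⟩
    exact ⟨x, mem_sphere_zero_iff_norm.1 x.2, by rw [sphereExtend_coe, hx]⟩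
  map_zero := by simp [sphereExtend]

end SphereIsometry

namespace ZeroAtInftyContinuousMap

variable {Γ β : Type*} [TopologicalSpace Γ] [NormedAddCommGroup β]

theorem norm_apply_le (f : C₀(Γ, β)) (γ : Γ) : ‖f γ‖ ≤ ‖f‖ :=
  norm_toBCF_eq_norm (f := f) ▸ f.toBCF.norm_coe_le_norm γ

theorem norm_le_iff {f : C₀(Γ, β)} {C : ℝ} (hC : 0 ≤ C) : ‖f‖ ≤ C ↔ ∀ γ, ‖f γ‖ ≤ C :=
  norm_toBCF_eq_norm (f := f) ▸ BoundedContinuousFunction.norm_le hC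

theorem coe_sum {ι : Type*} (s : Finset ι) (u : ι → C₀(Γ, β)) : ⇑(∑ i ∈ s, u i) = ∑ i ∈ s, ⇑(u i) :=
  map_sum (⟨⟨DFunLike.coe, coe_zero⟩, coe_add⟩ : C₀(Γ, β) →+ Γ → β) u s

theorem disjoint_support_sum {ι : Type*} {u : ι → C₀(Γ, β)}
    (hdisj : Pairwise (Disjoint on fun i => support (u i))) {i : ι} {s : Finset ι} (hi : i ∉ s) :
    Disjoint (support (u i)) (support ⇑(∑ j ∈ s, u j)) := by
  rw [coe_sum, Finset.sum_fn]
  refine (Set.disjoint_iUnion₂_right.2 fun j hj => ?_).mono_right (Finset.support_sum _ _)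
  exact hdisj (ne_of_mem_of_not_mem hj hi).symm

variable [DiscreteTopology Γ]

theorem finite_setOf_le_norm_apply (f : C₀(Γ, β)) {r : ℝ} (hr : 0 < r) :
    {γ | r ≤ ‖f γ‖}.Finite := by
  have : ∀ᶠ γ in Filter.cofinite, ‖f γ‖ < r := by
    rw [← Filter.cocompact_eq_cofinite]
    exact (tendsto_zero_iff_norm_tendsto_zero.1 (zero_at_infty f)).eventually (gt_mem_nhds hr)
  simpa using Filter.eventually_cofinite.1 this

theorem exists_norm_apply_eq_norm [Nonempty Γ] (f : C₀(Γ, β)) : ∃ γ, ‖f γ‖ = ‖f‖ := by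
  rcases eq_or_ne f 0 with rfl | hf
  · simp
  have hpos : 0 < ‖f‖ / 2 := by positivity
  obtain ⟨γ₀, hγ₀⟩ : ∃ γ, ‖f‖ / 2 < ‖f γ‖ := by
    by_contra! h
    linarith [(norm_le_iff hpos.le).2 h]
  obtain ⟨γ, hγ, hmax⟩ := Set.exists_max_image _ (fun γ => ‖f γ‖)
    (finite_setOf_le_norm_apply f hpos) ⟨γ₀, hγ₀.le⟩
  refine ⟨γ, le_antisymm (norm_apply_le f γ) ((norm_le_iff (norm_nonneg _)).2 fun δ => ?_)⟩
  by_cases hδ : ‖f‖ / 2 ≤ ‖f δ‖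
  · exact hmax δ hδ
  · exact (not_le.1 hδ).le.trans hγ

theorem norm_lt_of_forall_norm_apply_lt [Nonempty Γ] {f : C₀(Γ, β)} {C : ℝ}
    (h : ∀ γ, ‖f γ‖ < C) : ‖f‖ < C := by
  obtain ⟨γ, hγ⟩ := exists_norm_apply_eq_norm f
  exact hγ ▸ h γ

end ZeroAtInftyContinuousMap

open ZeroAtInftyContinuousMap

section Unimodular

variable {Γ β : Type*} [TopologicalSpace Γ] [NormedAddCommGroup β]

def UnimodularOnSupport (f : C₀(Γ, β)) : Prop :=
  ∀ γ, f γ ≠ 0 → ‖f γ‖ = 1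

namespace UnimodularOnSupport

variable {f g : C₀(Γ, β)}

theorem norm_le_one (hf : UnimodularOnSupport f) : ‖f‖ ≤ 1 :=
  (norm_le_iff zero_le_one).2 fun γ => by
    by_cases h : f γ = 0
    · simp [h]
    · exact (hf γ h).le

theorem norm_eq_one (hf : UnimodularOnSupport f) (hf0 : f ≠ 0) : ‖f‖ = 1 := by
  obtain ⟨γ, hγ⟩ : ∃ γ, f γ ≠ 0 := by
    by_contra! h
    exact hf0 (ext h)
  exact le_antisymm hf.norm_le_one (hf γ hγ ▸ norm_apply_le f γ)

theorem neg (hf : UnimodularOnSupport f) : UnimodularOnSupport (-f) := fun γ hγ => by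
  simpa using hf γ (by simpa using hγ)

theorem add (hf : UnimodularOnSupport f) (hg : UnimodularOnSupport g)
    (hfg : Disjoint (support f) (support g)) : UnimodularOnSupport (f + g) := fun γ hγ => by
  by_cases hfγ : f γ = 0
  · simp only [coe_add, Pi.add_apply, hfγ, zero_add] at hγ ⊢
    exact hg γ hγ
  · have hgγ : g γ = 0 := notMem_support.1 (Set.disjoint_left.1 hfg hfγ)
    simpa [hgγ] using hf γ hfγ

theorem sum {ι : Type*} {u : ι → C₀(Γ, β)} (hu : ∀ i, UnimodularOnSupport (u i))
    (hdisj : Pairwise (Disjoint on fun i => support (u i))) (s : Finset ι) :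
    UnimodularOnSupport (∑ i ∈ s, u i) := by
  classical
  induction s using Finset.induction_on with
  | empty => simp [UnimodularOnSupport]
  | insert i s hi ih =>
    rw [Finset.sum_insert hi]
    exact (hu i).add ih (disjoint_support_sum hdisj hi)

end UnimodularOnSupport

end Unimodular

section Discrete

variable {Γ : Type*} [TopologicalSpace Γ] [DiscreteTopology Γ]

theorem apply_eq_zero_of_forall_one_le_norm_sub {z : C₀(Γ, ℂ)} (hz : ‖z‖ ≤ 1) {γ : Γ}
    (h : ∀ q : C₀(Γ, ℂ), ‖q‖ = 1 → ‖q γ‖ = 1 → 1 ≤ ‖z - q‖) : z γ = 0 := by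
  by_contra hzγ
  have : Nonempty Γ := ⟨γ⟩
  set r := ‖z γ‖
  have hr : 0 < r := norm_pos_iff.2 hzγ
  have hr1 : r ≤ 1 := (norm_apply_le z γ).trans hz
  let phase : ℂ → ℂ := fun w => Complex.exp (Complex.arg w * Complex.I)
  have hphase : ∀ w, ‖phase w‖ = 1 := fun w => Complex.norm_exp_ofReal_mul_I _
  let q : C₀(Γ, ℂ) :=
    { toFun := fun δ => if r ≤ ‖z δ‖ then phase (z δ) else 0
      continuous_toFun := continuous_of_discreteTopology
      zero_at_infty' := by
        rw [Filter.cocompact_eq_cofinite]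
        refine tendsto_const_nhds.congr' ?_
        filter_upwards [(finite_setOf_le_norm_apply z hr).compl_mem_cofinite] with δ hδ
        simp_all }
  have hq : ∀ δ, q δ = if r ≤ ‖z δ‖ then phase (z δ) else 0 := fun δ => rfl
  have hqγ : ‖q γ‖ = 1 := by rw [hq, if_pos le_rfl, hphase]
  have hq1 : ‖q‖ = 1 := by
    refine UnimodularOnSupport.norm_eq_one (fun δ hδ => ?_) fun h0 => by simp [h0] at hqγ
    rw [hq] at hδ ⊢
    split_ifs at hδ ⊢
    exacts [hphase _, absurd rfl hδ]
  refine (h q hq1 hqγ).not_gt (norm_lt_of_forall_norm_apply_lt fun δ => ?_)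
  rw [coe_sub, Pi.sub_apply, hq]
  split_ifs with hδ
  · rw [Complex.norm_sub_exp_arg_mul_I ((norm_apply_le z δ).trans hz)]
    linarith
  · simpa using (not_le.1 hδ).trans_le hr1

end Discrete

section StdBasis

variable {Γ : Type*} [TopologicalSpace Γ] [DiscreteTopology Γ] [DecidableEq Γ]

@[simp]
theorem stdBasis_apply (n γ : Γ) : stdBasis n γ = if γ = n then 1 else 0 :=
  rfl

theorem norm_smul_stdBasis (μ : ℂ) (n : Γ) : ‖μ • stdBasis n‖ = ‖μ‖ :=
  le_antisymm ((norm_le_iff (norm_nonneg μ)).2 fun γ => by by_cases h : γ = n <;> simp [h])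
    (by simpa using norm_apply_le (μ • stdBasis n) n)

theorem support_smul_stdBasis_subset (μ : ℂ) (n : Γ) : support ⇑(μ • stdBasis n) ⊆ {n} :=
  fun γ hγ => by_contra fun h => hγ (by simp_all)

theorem unimodularOnSupport_smul_stdBasis {μ : ℂ} (hμ : ‖μ‖ = 1) (n : Γ) :
    UnimodularOnSupport (μ • stdBasis n) := fun γ hγ => by
  by_cases h : γ = n <;> simp_all

theorem unimodularOnSupport_stdBasis (n : Γ) : UnimodularOnSupport (stdBasis n) := by
  simpa using unimodularOnSupport_smul_stdBasis (norm_one (α := ℂ)) n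

theorem pairwise_disjoint_support_smul_stdBasis {ι : Type*} {n : ι → Γ} (hn : Injective n)
    (μ : ι → ℂ) : Pairwise (Disjoint on fun i => support ⇑(μ i • stdBasis (n i))) :=
  fun _ _ hij => Set.disjoint_of_subset (support_smul_stdBasis_subset _ _)
    (support_smul_stdBasis_subset _ _) (Set.disjoint_singleton.2 (hn.ne hij))

theorem norm_smul_stdBasis_add_le {u : C₀(Γ, ℂ)} {γ : Γ} (hu : ‖u‖ ≤ 1) (hγ : u γ = 0) {μ : ℂ}
    (hμ : ‖μ‖ ≤ 1) : ‖μ • stdBasis γ + u‖ ≤ 1 :=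
  (norm_le_iff zero_le_one).2 fun δ => by
    by_cases h : δ = γ
    · simpa [h, hγ] using hμ
    · simpa [h] using (norm_apply_le u δ).trans hu

theorem apply_eq_neg_of_two_le_norm_sub_smul_stdBasis {g : C₀(Γ, ℂ)} (hg : ‖g‖ ≤ 1) {μ : ℂ}
    (hμ : ‖μ‖ ≤ 1) {γ : Γ} (h : 2 ≤ ‖g - μ • stdBasis γ‖) : g γ = -μ := by
  have : Nonempty Γ := ⟨γ⟩
  have hgγ : 2 ≤ ‖g γ + -μ‖ := by
    by_contra! hlt
    refine h.not_gt (norm_lt_of_forall_norm_apply_lt fun δ => ?_)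
    by_cases hδ : δ = γ
    · simpa [hδ, sub_eq_add_neg] using hlt
    · simpa [hδ] using ((norm_apply_le g δ).trans hg).trans_lt one_lt_two
  exact eq_of_norm_le_one_of_two_le_norm_add ((norm_apply_le g γ).trans hg) (by simpa using hμ) hgγ

end StdBasis

namespace IsSphereIsometry

variable {Γ : Type*} [TopologicalSpace Γ] {X : Type*} [NormedAddCommGroup X] {D : C₀(Γ, ℂ) → X}

theorem norm_map_le_one (hD : IsSphereIsometry D) {u : C₀(Γ, ℂ)} (hu : UnimodularOnSupport u) :
    ‖D u‖ ≤ 1 := by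
  rcases eq_or_ne u 0 with rfl | hu0
  · simp [hD.map_zero]
  · exact (hD.norm_map u (hu.norm_eq_one hu0)).le

variable [DiscreteTopology Γ] [DecidableEq Γ]

theorem norm_map_smul_stdBasis (hD : IsSphereIsometry D) {μ : ℂ} (hμ : ‖μ‖ = 1) (γ : Γ) :
    ‖D (μ • stdBasis γ)‖ = 1 :=
  hD.norm_map _ (by rw [norm_smul_stdBasis, hμ])

theorem norm_map_stdBasis (hD : IsSphereIsometry D) (γ : Γ) : ‖D (stdBasis γ)‖ = 1 := by
  simpa using hD.norm_map_smul_stdBasis (norm_one (α := ℂ)) γ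

variable [NormedSpace ℂ X]

theorem apply_eq_neg_of_map_eq_neg_smul_stdBasis (hD : IsSphereIsometry D) {g : C₀(Γ, ℂ)}
    (hg : ‖g‖ = 1) {μ : ℂ} (hμ : ‖μ‖ = 1) {γ : Γ} (h : D g = -D (μ • stdBasis γ)) :
    g γ = -μ := by
  refine apply_eq_neg_of_two_le_norm_sub_smul_stdBasis hg.le hμ.le ?_
  rw [← hD.norm_map_sub_map _ _ hg (by rw [norm_smul_stdBasis, hμ]), h, ← neg_add', norm_neg,
    ← two_smul ℂ, norm_smul, hD.norm_map_smul_stdBasis hμ]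
  norm_num

theorem two_le_norm_map_add_map_smul_stdBasis (hD : IsSphereIsometry D) {x : C₀(Γ, ℂ)}
    (hx : ‖x‖ = 1) {γ : Γ} (hxγ : ‖x γ‖ = 1) : 2 ≤ ‖D x + D (x γ • stdBasis γ)‖ := by
  obtain ⟨g, hg, hDg⟩ := hD.exists_map_eq (-D (x γ • stdBasis γ))
    (by rw [norm_neg, hD.norm_map_smul_stdBasis hxγ])
  calc (2 : ℝ) = ‖x γ - g γ‖ := by
        rw [hD.apply_eq_neg_of_map_eq_neg_smul_stdBasis hg hxγ hDg, sub_neg_eq_add, ← two_mul,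
          norm_mul, hxγ]
        norm_num
    _ ≤ ‖x - g‖ := norm_apply_le (x - g) γ
    _ = ‖D x + D (x γ • stdBasis γ)‖ := by
        rw [← hD.norm_map_sub_map _ _ hx hg, hDg, sub_neg_eq_add]

theorem apply_eq_neg_of_map_eq_neg (hD : IsSphereIsometry D) {x w : C₀(Γ, ℂ)} (hx : ‖x‖ = 1)
    (hw : ‖w‖ = 1) (h : D w = -D x) {γ : Γ} (hxγ : ‖x γ‖ = 1) : w γ = -x γ := by
  refine apply_eq_neg_of_two_le_norm_sub_smul_stdBasis hw.le hxγ.le ?_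
  rw [← hD.norm_map_sub_map _ _ hw (by rw [norm_smul_stdBasis, hxγ]), h, ← neg_add', norm_neg]
  exact hD.two_le_norm_map_add_map_smul_stdBasis hx hxγ

theorem one_le_norm_sub_of_map_eq_neg (hD : IsSphereIsometry D) {x g : C₀(Γ, ℂ)} (hx : ‖x‖ = 1)
    (hg : ‖g‖ = 1) (h : D g = -D x) {γ : Γ} (hxγ : x γ = 0) {q : C₀(Γ, ℂ)} (hq : ‖q‖ = 1)
    (hqγ : ‖q γ‖ = 1) : 1 ≤ ‖g - q‖ := by
  obtain ⟨g', hg', hDg'⟩ := hD.exists_map_eq (-D q) (by rw [norm_neg, hD.norm_map q hq])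
  calc (1 : ℝ) = ‖x γ - g' γ‖ := by
        rw [hxγ, hD.apply_eq_neg_of_map_eq_neg hq hg' hDg' hqγ, zero_sub, neg_neg, hqγ]
    _ ≤ ‖x - g'‖ := norm_apply_le (x - g') γ
    _ = ‖g - q‖ := by
        rw [← hD.norm_map_sub_map _ _ hx hg', ← hD.norm_map_sub_map _ _ hg hq, h, hDg', ← norm_neg]
        congr 1
        abel

theorem map_neg (hD : IsSphereIsometry D) {u : C₀(Γ, ℂ)} (hu : UnimodularOnSupport u) :
    D (-u) = -D u := by
  rcases eq_or_ne u 0 with rfl | hu0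
  · simp [hD.map_zero]
  have hu1 := hu.norm_eq_one hu0
  obtain ⟨g, hg, hDg⟩ := hD.exists_map_eq (-D u) (by rw [norm_neg, hD.norm_map u hu1])
  suffices g = -u by rw [← this, hDg]
  ext γ
  by_cases huγ : u γ = 0
  · rw [coe_neg, Pi.neg_apply, huγ, neg_zero]
    exact apply_eq_zero_of_forall_one_le_norm_sub hg.le fun q hq hqγ =>
      hD.one_le_norm_sub_of_map_eq_neg hu1 hg hDg huγ hq hqγ
  · exact hD.apply_eq_neg_of_map_eq_neg hu1 hg hDg (hu γ huγ)

theorem norm_map_add_map (hD : IsSphereIsometry D) {z u : C₀(Γ, ℂ)} (hz : ‖z‖ = 1)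
    (hu : UnimodularOnSupport u) : ‖D z + D u‖ = ‖z + u‖ := by
  rcases eq_or_ne u 0 with rfl | hu0
  · simp [hD.map_zero, hD.norm_map z hz, hz]
  have : D u = -D (-u) := by rw [← hD.map_neg hu.neg, neg_neg]
  rw [this, ← sub_eq_add_neg, hD.norm_map_sub_map _ _ hz (by rw [norm_neg, hu.norm_eq_one hu0]),
    sub_neg_eq_add]

theorem exists_dual_map_eq_one (hD : IsSphereIsometry D) {x : C₀(Γ, ℂ)} (hx : ‖x‖ = 1) {γ : Γ}
    (hxγ : ‖x γ‖ = 1) :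
    ∃ φ : X →L[ℂ] ℂ, ‖φ‖ ≤ 1 ∧ φ (D x) = 1 ∧ φ (D (x γ • stdBasis γ)) = 1 :=
  exists_dual_eq_one_of_two_le_norm_add (hD.norm_map x hx).le
    (hD.norm_map_smul_stdBasis hxγ γ).le (hD.two_le_norm_map_add_map_smul_stdBasis hx hxγ)

theorem dual_map_eq_zero (hD : IsSphereIsometry D) {μ : ℂ} (hμ : ‖μ‖ = 1) {γ : Γ}
    {φ : X →L[ℂ] ℂ} (hφ : ‖φ‖ ≤ 1) (hφγ : φ (D (μ • stdBasis γ)) = 1) {u : C₀(Γ, ℂ)}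
    (hu : UnimodularOnSupport u) (huγ : u γ = 0) : φ (D u) = 0 := by
  rcases eq_or_ne u 0 with rfl | hu0
  · simp [hD.map_zero]
  have key : ∀ v : C₀(Γ, ℂ), ‖v‖ = 1 → v γ = 0 → ‖1 - φ (D v)‖ ≤ 1 := fun v hv hvγ => by
    have : ‖μ • stdBasis γ - v‖ ≤ 1 := by
      simpa [sub_eq_add_neg] using
        norm_smul_stdBasis_add_le (u := -v) (by rw [norm_neg, hv]) (by simp [hvγ]) hμ.le
    rw [← hφγ, ← map_sub]
    simpa using φ.le_of_opNorm_le_of_le hφ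
      ((hD.norm_map_sub_map _ _ (by rw [norm_smul_stdBasis, hμ]) hv).trans_le this)
  -- `1 - φ (D u)` and, as `D (-u) = -D u`, also `1 + φ (D u)` lie in the closed unit disc
  have h1 := key u (hu.norm_eq_one hu0) huγ
  have h2 := key (-u) (by rw [norm_neg, hu.norm_eq_one hu0]) (by simp [huγ])
  rw [hD.map_neg hu, _root_.map_neg, sub_neg_eq_add] at h2
  have := eq_of_norm_le_one_of_two_le_norm_add h1 h2 (by ring_nf; norm_num)
  linear_combination -this / 2

theorem apply_eq_zero_of_dual (hD : IsSphereIsometry D) {z : C₀(Γ, ℂ)} (hz : ‖z‖ = 1) {γ : Γ}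
    (h : ∀ (μ : ℂ) (φ : X →L[ℂ] ℂ), ‖μ‖ = 1 → ‖φ‖ ≤ 1 → φ (D (μ • stdBasis γ)) = 1 →
      φ (D z) = 0) :
    z γ = 0 := by
  refine apply_eq_zero_of_forall_one_le_norm_sub hz.le fun q hq hqγ => ?_
  obtain ⟨φ, hφ, hφq, hφγ⟩ := hD.exists_dual_map_eq_one hq hqγ
  calc (1 : ℝ) = ‖φ (D z - D q)‖ := by rw [map_sub, h _ φ hqγ hφ hφγ, hφq]; norm_num
    _ ≤ 1 * ‖D z - D q‖ := φ.le_of_opNorm_le hφ _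
    _ = ‖z - q‖ := by rw [one_mul, hD.norm_map_sub_map _ _ hz hq]

theorem apply_eq_of_dual (hD : IsSphereIsometry D) {w : C₀(Γ, ℂ)} (hw : ‖w‖ = 1) {μ : ℂ}
    (hμ : ‖μ‖ = 1) {γ : Γ} {φ : X →L[ℂ] ℂ} (hφ : ‖φ‖ ≤ 1) (hφγ : φ (D (μ • stdBasis γ)) = 1)
    (hφw : φ (D w) = 1) : w γ = μ := by
  have := apply_eq_neg_of_two_le_norm_sub_smul_stdBasis hw.le (μ := -μ) (γ := γ)
    (by rw [norm_neg, hμ]) ?_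
  · rwa [neg_neg] at this
  calc (2 : ℝ) = ‖φ (D w + D (μ • stdBasis γ))‖ := by rw [_root_.map_add, hφw, hφγ]; norm_num
    _ ≤ 1 * ‖D w + D (μ • stdBasis γ)‖ := φ.le_of_opNorm_le hφ _
    _ = ‖w - -μ • stdBasis γ‖ := by
        rw [one_mul, hD.norm_map_add_map hw (unimodularOnSupport_smul_stdBasis hμ γ)]
        congr 1
        ext δ
        simp

theorem apply_eq_of_map_eq_add (hD : IsSphereIsometry D) {a b w : C₀(Γ, ℂ)}
    (ha : UnimodularOnSupport a) (hb : UnimodularOnSupport b) (hw : ‖w‖ = 1)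
    (h : D w = D a + D b) {γ : Γ} (haγ : a γ ≠ 0) (hbγ : b γ = 0) : w γ = a γ := by
  obtain ⟨φ, hφ, hφa, hφγ⟩ :=
    hD.exists_dual_map_eq_one (ha.norm_eq_one fun h0 => haγ (by simp [h0])) (ha γ haγ)
  refine hD.apply_eq_of_dual hw (ha γ haγ) hφ hφγ ?_
  rw [h, _root_.map_add, hφa, hD.dual_map_eq_zero (ha γ haγ) hφ hφγ hb hbγ, add_zero]

theorem map_add (hD : IsSphereIsometry D) {a b : C₀(Γ, ℂ)} (ha : UnimodularOnSupport a)
    (hb : UnimodularOnSupport b) (hab : Disjoint (support a) (support b)) :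
    D (a + b) = D a + D b := by
  rcases eq_or_ne a 0 with rfl | ha0
  · simp [hD.map_zero]
  obtain ⟨γ₀, hγ₀⟩ := DFunLike.ne_iff.1 ha0
  have hab0 : a + b ≠ 0 := fun h0 => hγ₀ (by
    simpa [notMem_support.1 (Set.disjoint_left.1 hab hγ₀)] using DFunLike.congr_fun h0 γ₀)
  obtain ⟨w, hw, hDw⟩ := hD.exists_map_eq (D a + D b) (by
    rw [hD.norm_map_add_map (ha.norm_eq_one ha0) hb, (ha.add hb hab).norm_eq_one hab0])
  suffices w = a + b by rw [← this, hDw]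
  ext γ
  rw [coe_add, Pi.add_apply]
  by_cases haγ : a γ = 0
  · by_cases hbγ : b γ = 0
    · rw [haγ, hbγ, add_zero]
      refine hD.apply_eq_zero_of_dual hw fun μ φ hμ hφ hφγ => ?_
      rw [hDw, _root_.map_add, hD.dual_map_eq_zero hμ hφ hφγ ha haγ,
        hD.dual_map_eq_zero hμ hφ hφγ hb hbγ, add_zero]
    · rw [haγ, zero_add]
      exact hD.apply_eq_of_map_eq_add hb ha hw (by rw [hDw, add_comm]) hbγ haγ
  · have hbγ : b γ = 0 := notMem_support.1 (Set.disjoint_left.1 hab haγ)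
    rw [hbγ, add_zero]
    exact hD.apply_eq_of_map_eq_add ha hb hw hDw haγ hbγ

theorem map_sum (hD : IsSphereIsometry D) {ι : Type*} {u : ι → C₀(Γ, ℂ)}
    (hu : ∀ i, UnimodularOnSupport (u i)) (hdisj : Pairwise (Disjoint on fun i => support (u i)))
    (s : Finset ι) : D (∑ i ∈ s, u i) = ∑ i ∈ s, D (u i) := by
  classical
  induction s using Finset.induction_on with
  | empty => simp [hD.map_zero]
  | insert i s hi ih =>
    rw [Finset.sum_insert hi, Finset.sum_insert hi,
      hD.map_add (hu i) (UnimodularOnSupport.sum hu hdisj s) (disjoint_support_sum hdisj hi), ih]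

theorem exists_map_smul_stdBasis_eq_smul (hD : IsSphereIsometry D) {ε : ℂ} (hε : ‖ε‖ = 1)
    (n : Γ) : ∃ ζ : ℂ, ‖ζ‖ = 1 ∧ D (ζ • stdBasis n) = ε • D (stdBasis n) := by
  obtain ⟨z, hz, hDz⟩ := hD.exists_map_eq (ε • D (stdBasis n))
    (by rw [norm_smul, hε, hD.norm_map_stdBasis, one_mul])
  have hzn : z = z n • stdBasis n := by
    ext γ
    by_cases hγ : γ = n
    · simp [hγ]
    · simp only [coe_smul, Pi.smul_apply, stdBasis_apply, hγ, if_false, smul_zero]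
      refine hD.apply_eq_zero_of_dual hz fun μ φ hμ hφ hφγ => ?_
      rw [hDz, map_smul, hD.dual_map_eq_zero hμ hφ hφγ (unimodularOnSupport_stdBasis n)
        (by simp [hγ]), smul_zero]
  exact ⟨z n, by rw [← norm_smul_stdBasis (z n) n, ← hzn, hz], by rw [← hzn, hDz]⟩

theorem norm_sum_smul_map_stdBasis_le (hD : IsSphereIsometry D) {ι : Type*} [Fintype ι]
    {n : ι → Γ} (hn : Injective n) {β : ι → ℂ} (hβ : ∀ i, ‖β i‖ = 1) :
    ‖∑ i, β i • D (stdBasis (n i))‖ ≤ 1 := by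
  choose ζ hζ hDζ using fun i => hD.exists_map_smul_stdBasis_eq_smul (hβ i) (n i)
  have hu := fun i => unimodularOnSupport_smul_stdBasis (hζ i) (n i)
  have hdisj := pairwise_disjoint_support_smul_stdBasis hn ζ
  simp_rw [← hDζ, ← hD.map_sum hu hdisj]
  exact hD.norm_map_le_one (UnimodularOnSupport.sum hu hdisj _)

theorem exists_dual_map_stdBasis (hD : IsSphereIsometry D) (γ : Γ) :
    ∃ φ : X →L[ℂ] ℂ, ‖φ‖ ≤ 1 ∧ φ (D (stdBasis γ)) = 1 ∧ ∀ δ ≠ γ, φ (D (stdBasis δ)) = 0 := by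
  obtain ⟨φ, hφ, hφγ⟩ := exists_dual_vector'' ℂ (D (stdBasis γ))
  replace hφγ : φ (D (stdBasis γ)) = 1 := by simpa [hD.norm_map_stdBasis] using hφγ
  refine ⟨φ, hφ, hφγ, fun δ hδ => hD.dual_map_eq_zero (norm_one (α := ℂ)) hφ (by simpa using hφγ)
    (unimodularOnSupport_stdBasis δ) (by simp [Ne.symm hδ])⟩

end IsSphereIsometry

theorem additivity_and_complete_M_orthogonality_general {Γ : Type*} [TopologicalSpace Γ]
    [DiscreteTopology Γ] [DecidableEq Γ]
    {X : Type*} [NormedAddCommGroup X] [NormedSpace ℂ X]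
    (Δ : sphere (0 : C₀(Γ, ℂ)) 1 → sphere (0 : X) 1)
    (hΔiso : Isometry Δ) (hΔsurj : Function.Surjective Δ)
    (k : ℕ) (hk : 0 < k) (n : Fin k → Γ) (hn : Function.Injective n) :
    (∀ α : Fin k → ℂ, (∀ j, ‖α j‖ = 1) →
      ∀ x : Fin k → sphere (0 : C₀(Γ, ℂ)) 1, (∀ j, (x j : C₀(Γ, ℂ)) = α j • stdBasis (n j)) →
      ∀ s : sphere (0 : C₀(Γ, ℂ)) 1, (s : C₀(Γ, ℂ)) = ∑ j, α j • stdBasis (n j) →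
        ∑ j, (Δ (x j) : X) = (Δ s : X)) ∧
    (∀ y : Fin k → sphere (0 : C₀(Γ, ℂ)) 1, (∀ j, (y j : C₀(Γ, ℂ)) = stdBasis (n j)) →
      ∀ α : Fin k → ℂ, ‖∑ j, α j • (Δ (y j) : X)‖ =
        Finset.univ.sup' (Finset.univ_nonempty_iff.mpr (Fin.pos_iff_nonempty.mp hk))
          (fun j => ‖α j‖)) := by
  have hD := isSphereIsometry_sphereExtend hΔiso hΔsurj
  refine ⟨fun α hα x hx s hs => ?_, fun y hy α => ?_⟩
  · have hu j := unimodularOnSupport_smul_stdBasis (hα j) (n j)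
    rw [← sphereExtend_coe Δ s, hs, hD.map_sum hu (pairwise_disjoint_support_smul_stdBasis hn α)]
    simp_rw [← hx, sphereExtend_coe]
  · set v : Fin k → X := fun j => sphereExtend Δ (stdBasis (n j))
    have hv : ∀ j, (Δ (y j) : X) = v j := fun j => by rw [← sphereExtend_coe, hy]
    obtain ⟨j, -, hj⟩ := Finset.exists_mem_eq_sup' ⟨⟨0, hk⟩, Finset.mem_univ _⟩ fun j => ‖α j‖
    simp_rw [hj, hv]
    obtain ⟨φ, hφ, hφj, hφi⟩ := hD.exists_dual_map_stdBasis (n j)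
    refine le_antisymm ?_
      (norm_le_norm_sum_smul_of_dual (v := v) hφ hφj (fun i hi => hφi _ (hn.ne hi)) α)
    exact norm_sum_smul_le_of_forall_norm_eq_one
      (fun β hβ => hD.norm_sum_smul_map_stdBasis_le hn hβ) (norm_nonneg _)
      fun i => (Finset.le_sup' _ (Finset.mem_univ i)).trans_eq hj

/-- For distinct coordinates `n₁, …, n_k`, `Δ` is additive on unimodular combinations of the
basis vectors, and the family `{Δ(e_{n_j})}` is completely `M`-orthogonal. -/
theorem additivity_and_complete_M_orthogonality {Γ : Type*} [TopologicalSpace Γ]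
    [DiscreteTopology Γ] [DecidableEq Γ] [Infinite Γ]
    {X : Type*} [NormedAddCommGroup X] [NormedSpace ℂ X] [CompleteSpace X]
    (Δ : sphere (0 : C₀(Γ, ℂ)) 1 → sphere (0 : X) 1)
    (hΔiso : Isometry Δ) (hΔsurj : Function.Surjective Δ)
    (k : ℕ) (hk : 0 < k) (n : Fin k → Γ) (hn : Function.Injective n) :
    (∀ α : Fin k → ℂ, (∀ j, ‖α j‖ = 1) →
      ∀ x : Fin k → sphere (0 : C₀(Γ, ℂ)) 1, (∀ j, (x j : C₀(Γ, ℂ)) = α j • stdBasis (n j)) →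
      ∀ s : sphere (0 : C₀(Γ, ℂ)) 1, (s : C₀(Γ, ℂ)) = ∑ j, α j • stdBasis (n j) →
        ∑ j, (Δ (x j) : X) = (Δ s : X)) ∧
    (∀ y : Fin k → sphere (0 : C₀(Γ, ℂ)) 1, (∀ j, (y j : C₀(Γ, ℂ)) = stdBasis (n j)) →
      ∀ α : Fin k → ℂ, ‖∑ j, α j • (Δ (y j) : X)‖ =
        Finset.univ.sup' (Finset.univ_nonempty_iff.mpr (Fin.pos_iff_nonempty.mp hk))
          (fun j => ‖α j‖)) :=
  additivity_and_complete_M_orthogonality_general Δ hΔiso hΔsurj k hk n hn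
end

section
/- In the three dimensional complex space ℓ∞³, the elements x = (1, 1/2, 0) and y = (0, (√3 i)/2, 1) are M-orthogonal (‖x ± y‖ = max{‖x‖, ‖y‖} = 1) but not completely M-orthogonal (there exist α, β ∈ ℂ with ‖αx + βy‖ ≠ max{|α|, |β|}). -/
/-!
The middle coordinates `1/2` and `(√3/2) i` of `x` and `y` have modulus less than `1`.
For `β = ±1` they add up to the sixth roots of unity `1/2 ± (√3/2) i`, so `‖x ± y‖ = 1`;
but after rotating `y` by `-i` they point in the same direction and add up to
`1/2 + √3/2 > 1`, so `‖x - i y‖ > 1 = max ‖1‖ ‖-i‖`.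
-/

open Complex ComplexConjugate

lemma Pi.norm_vec_three {E : Type*} [SeminormedAddGroup E] (a b c : E) :
    ‖![a, b, c]‖ = max ‖a‖ (max ‖b‖ ‖c‖) := by
  simp [Pi.norm_def, Fin.univ_succ]

lemma norm_sqrt_three_mul_I_div_two_le_one : ‖(√3 : ℂ) * I / 2‖ ≤ 1 := by
  have h : √3 ≤ 2 := Real.sqrt_le_iff.mpr ⟨zero_le_two, by norm_num⟩
  simp only [norm_div, norm_mul, norm_I, mul_one, norm_real, Complex.norm_ofNat,
    Real.norm_of_nonneg (Real.sqrt_nonneg 3)]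
  linarith

lemma norm_half_add_sqrt_three_mul_I_div_two : ‖(1 / 2 : ℂ) + √3 * I / 2‖ = 1 := by
  have h := norm_add_mul_I (1 / 2) (√3 / 2)
  push_cast at h
  rw [mul_div_right_comm, h, Real.sqrt_eq_one]
  norm_num [div_pow]

lemma norm_half_sub_sqrt_three_mul_I_div_two : ‖(1 / 2 : ℂ) - √3 * I / 2‖ = 1 := by
  have h : (1 / 2 : ℂ) - √3 * I / 2 = conj ((1 / 2 : ℂ) + √3 * I / 2) := by
    simp only [map_add, map_div₀, map_mul, conj_ofReal, conj_I, map_one, map_ofNat]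
    ring
  rw [h, norm_conj, norm_half_add_sqrt_three_mul_I_div_two]

lemma one_lt_norm_half_add_sqrt_three_div_two : 1 < ‖(1 / 2 : ℂ) + √3 / 2‖ := by
  have h : (1 : ℝ) < √3 := by
    rw [Real.lt_sqrt zero_le_one]
    norm_num
  rw [show (1 / 2 : ℂ) + √3 / 2 = ((1 / 2 + √3 / 2 : ℝ) : ℂ) by push_cast; rfl,
    norm_real, Real.norm_of_nonneg (by positivity)]
  linarith

/-- In `ℓ∞³ = (ℂ³, ‖·‖∞)`, the elements `x = (1, 1/2, 0)` and `y = (0, (√3 i)/2, 1)` are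
`M`-orthogonal but not completely `M`-orthogonal. -/
theorem M_orthogonal_not_completely_M_orthogonal :
    let x : Fin 3 → ℂ := ![1, 1/2, 0]
    let y : Fin 3 → ℂ := ![0, (Real.sqrt 3 : ℂ) * Complex.I / 2, 1]
    ‖x‖ = 1 ∧ ‖y‖ = 1 ∧ ‖x + y‖ = max ‖x‖ ‖y‖ ∧ ‖x - y‖ = max ‖x‖ ‖y‖ ∧
      ∃ α β : ℂ, ‖α • x + β • y‖ ≠ max ‖α‖ ‖β‖ := by
  intro x y
  have hx : ‖x‖ = 1 := by norm_num [x, Pi.norm_vec_three]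
  have hy : ‖y‖ = 1 := by
    simp only [y, Pi.norm_vec_three, norm_zero, norm_one, max_eq_right zero_le_one,
      max_eq_right norm_sqrt_three_mul_I_div_two_le_one]
  have h_rotate : -I * (√3 * I / 2) = √3 / 2 := by
    linear_combination (-(√3 : ℂ) / 2) * I_sq
  refine ⟨hx, hy, ?_, ?_, 1, -I, ?_⟩
  all_goals simp only [hx, hy, max_self, x, y, Matrix.cons_add_cons, Matrix.cons_sub_cons,
    Matrix.smul_cons, Matrix.smul_empty, Matrix.empty_add_empty, Matrix.empty_sub_empty,
    Pi.norm_vec_three, add_zero, zero_add, sub_zero, zero_sub, norm_neg, norm_one, one_smul,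
    smul_eq_mul, mul_one, norm_I, h_rotate]
  · rw [norm_half_add_sqrt_three_mul_I_div_two, max_self, max_self]
  · rw [norm_half_sub_sqrt_three_mul_I_div_two, max_self, max_self]
  · exact (lt_max_of_lt_right (lt_max_of_lt_left one_lt_norm_half_add_sqrt_three_div_two)).ne'
end
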